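/- arXiv:2503.12607 — 2 statements merged into one kernel-verified Lean document; each statement's English description precedes it below -/
import Mathlib

section
/- Let c > 0, δ > 0, and k ∈ ℕ be constants, fix a real number a with 0 < a < 1, and consider bootstrap percolation on Q_n with infection threshold ⌈n^a⌉, where each vertex is initially infected independently with some probability p. Suppose that for all sufficiently large n and every vertex x ∈ V(Q_n), P(x ∉ A_k) ≤ exp(−c·n^δ). Then there exists a constant d > 0 such that for all sufficiently large n and every vertex x, P(x ∉ A_{2k+1}) ≤ exp(−d·n^{1+δ}). -/
/-!
If `x` is still healthy at time `2k + 1`, then, as the threshold `⌈n^a⌉` is far below `n`, we can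
flip a fresh coordinate of `x` to reach a vertex healthy at time `2k`, and so on `k + 1` times.
Repeating this greedily on unused coordinates yields `m ≈ n / (2(k+1))` vertices `x ⊕ S_j` outside
`A_k`, with pairwise disjoint `(k+1)`-sets `S_j`. These vertices are at distance `2(k+1)` from
each other, and membership in `A_k` only depends on the initial configuration in the ball of
radius `k`, so the `m` events are independent. A union bound over the at most `n^{(k+1)m}`
families gives `P(x ∉ A_{2k+1}) ≤ (n^{k+1} e^{-c n^δ})^m ≤ exp(-d n^{1+δ})`.
-/

open Finset Filter
open scoped Classical

noncomputable section

/-- The infected set after `i` steps of `r`-neighbour bootstrap percolation on the graph `G`,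
starting from the initial infected set `A0`:
`A_{i+1} = A_i ∪ {v : |N(v) ∩ A_i| ≥ r}`. -/
def bootSets {V : Type*} [Fintype V] [DecidableEq V] (G : SimpleGraph V) (r : ℕ)
    (A0 : Finset V) : ℕ → Finset V
  | 0 => A0
  | i + 1 =>
      bootSets G r A0 i ∪
        Finset.univ.filter fun v => r ≤ (G.neighborFinset v ∩ bootSets G r A0 i).card

/-- `A0` percolates under the `r`-neighbour bootstrap process on `G`. -/
def percolates {V : Type*} [Fintype V] [DecidableEq V] (G : SimpleGraph V) (r : ℕ)
    (A0 : Finset V) : Prop :=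
  ∃ i, bootSets G r A0 i = Finset.univ

/-- The probability that the initial infected set is exactly `A`, when every vertex is
infected independently with probability `p`. -/
def configProb {V : Type*} [Fintype V] [DecidableEq V] (p : ℝ) (A : Finset V) : ℝ :=
  p ^ A.card * (1 - p) ^ (Fintype.card V - A.card)

/-- The probability of the event `E` about the initial infected set, when every vertex is
infected independently with probability `p`. -/
def probEvent {V : Type*} [Fintype V] [DecidableEq V] (p : ℝ) (E : Finset V → Prop) : ℝ :=
  ∑ A : Finset V, if E A then configProb p A else 0

/-- The generalized hypercube `Q_{k,n}`: vertices are `{0,1}^n`, two vertices being adjacent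
iff their Hamming distance is between `1` and `k`.  The usual hypercube `Q_n` is
`cubeGraph n 1`. -/
def cubeGraph (n k : ℕ) : SimpleGraph (Fin n → Bool) where
  Adj x y := 1 ≤ hammingDist x y ∧ hammingDist x y ≤ k
  symm := by
    constructor
    intro x y h
    rwa [hammingDist_comm]
  loopless := by
    constructor
    intro x h
    simp [hammingDist_self] at h

/-- The critical probability for `r`-neighbour bootstrap percolation on `Q_{k,n}` where every
vertex is initially infected independently with probability `p`:
the supremum of all `p ∈ (0,1)` for which percolation has probability at most `1/2`. -/
def critProb (n k r : ℕ) : ℝ :=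
  sSup {p : ℝ | p ∈ Set.Ioo (0 : ℝ) 1 ∧
    probEvent p (fun A0 => percolates (cubeGraph n k) r A0) ≤ 1 / 2}

/-- The `Boot1(t)` process with base threshold `r`: at step `1` the threshold is `r - t`,
afterwards it is `r`. -/
def boot1Sets {V : Type*} [Fintype V] [DecidableEq V] (G : SimpleGraph V) (r t : ℕ)
    (A0 : Finset V) : ℕ → Finset V
  | 0 => A0
  | 1 => A0 ∪ Finset.univ.filter fun v => r - t ≤ (G.neighborFinset v ∩ A0).card
  | i + 2 =>
      boot1Sets G r t A0 (i + 1) ∪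
        Finset.univ.filter fun v =>
          r ≤ (G.neighborFinset v ∩ boot1Sets G r t A0 (i + 1)).card

/-- The `Boot2(t)` (= `Boot3(t)`) process with base threshold `r`: at step `1` the threshold
is `r - 2t`, at step `2` it is `r - t`, and afterwards it is `r`. -/
def boot2Sets {V : Type*} [Fintype V] [DecidableEq V] (G : SimpleGraph V) (r t : ℕ)
    (A0 : Finset V) : ℕ → Finset V
  | 0 => A0
  | 1 => A0 ∪ Finset.univ.filter fun v => r - 2 * t ≤ (G.neighborFinset v ∩ A0).card
  | 2 =>
      boot2Sets G r t A0 1 ∪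
        Finset.univ.filter fun v =>
          r - t ≤ (G.neighborFinset v ∩ boot2Sets G r t A0 1).card
  | i + 3 =>
      boot2Sets G r t A0 (i + 2) ∪
        Finset.univ.filter fun v =>
          r ≤ (G.neighborFinset v ∩ boot2Sets G r t A0 (i + 2)).card


section Probability

variable {V : Type*} [Fintype V] [DecidableEq V] {p : ℝ}

def DeterminedOn (E : Finset V → Prop) (T : Finset V) : Prop :=
  ∀ A, E A ↔ E (A ∩ T)

omit [Fintype V] in
theorem DeterminedOn.mono {E : Finset V → Prop} {S T : Finset V} (hE : DeterminedOn E S)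
    (hST : S ⊆ T) : DeterminedOn E T := fun A => by
  rw [hE A, hE (A ∩ T), inter_assoc, inter_eq_right.2 hST]

def probOn (p : ℝ) (T : Finset V) (E : Finset V → Prop) : ℝ :=
  ∑ B ∈ T.powerset, if E B then p ^ #B * (1 - p) ^ (#T - #B) else 0

omit [Fintype V] in
theorem sum_powerset_union_mul {R : Type*} [CommSemiring R] {S T : Finset V}
    (hST : Disjoint S T) (f g : Finset V → R) :
    ∑ B ∈ (S ∪ T).powerset, f (B ∩ S) * g (B ∩ T) =
      (∑ B ∈ S.powerset, f B) * ∑ B ∈ T.powerset, g B := by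
  rw [sum_mul_sum, ← sum_product']
  refine sum_nbij' (fun B => (B ∩ S, B ∩ T)) (fun X => X.1 ∪ X.2) ?_ ?_ ?_ ?_ fun _ _ => rfl
  · intro B _
    simp [inter_subset_right]
  · intro X hX
    simp only [mem_product, mem_powerset] at hX ⊢
    exact union_subset_union hX.1 hX.2
  · intro B hB
    rw [mem_powerset] at hB
    simp only [← inter_union_distrib_left, inter_eq_left.2 hB]
  · rintro ⟨X, Y⟩ hXY
    simp only [mem_product, mem_powerset] at hXY
    simp only [union_inter_distrib_right, inter_eq_left.2 hXY.1, inter_eq_left.2 hXY.2,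
      disjoint_iff_inter_eq_empty.1 (hST.mono_left hXY.1),
      disjoint_iff_inter_eq_empty.1 (hST.symm.mono_left hXY.2), union_empty, empty_union]

omit [Fintype V] in
theorem probOn_union {S T : Finset V} (hST : Disjoint S T) (E F : Finset V → Prop) :
    probOn p (S ∪ T) (fun B => E (B ∩ S) ∧ F (B ∩ T)) = probOn p S E * probOn p T F := by
  rw [probOn, probOn, probOn, ← sum_powerset_union_mul hST]
  refine sum_congr rfl fun B hB => ?_
  have hB : B ∩ S ∪ B ∩ T = B := by
    rw [← inter_union_distrib_left, inter_eq_left.2 (mem_powerset.1 hB)]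
  have hcard : #B = #(B ∩ S) + #(B ∩ T) := by
    rw [← card_union_of_disjoint (hST.mono inter_subset_right inter_subset_right), hB]
  have hS := card_le_card (inter_subset_right : B ∩ S ⊆ S)
  have hT := card_le_card (inter_subset_right : B ∩ T ⊆ T)
  have hweight : p ^ #B * (1 - p) ^ (#(S ∪ T) - #B) =
      p ^ #(B ∩ S) * (1 - p) ^ (#S - #(B ∩ S)) * (p ^ #(B ∩ T) * (1 - p) ^ (#T - #(B ∩ T))) := by
    rw [card_union_of_disjoint hST, hcard,
      show #S + #T - (#(B ∩ S) + #(B ∩ T)) = (#S - #(B ∩ S)) + (#T - #(B ∩ T)) by omega]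
    ring
  split_ifs <;> simp_all

omit [Fintype V] [DecidableEq V] in
theorem probOn_true (T : Finset V) : probOn p T (fun _ => True) = 1 := by
  simp [probOn, sum_pow_mul_eq_add_pow]

theorem probEvent_eq_probOn_univ (E : Finset V → Prop) : probEvent p E = probOn p univ E := by
  simp only [probEvent, probOn, configProb, powerset_univ, card_univ]

theorem probEvent_and_eq_probOn_mul {E F : Finset V → Prop} {S : Finset V}
    (hE : DeterminedOn E S) (hF : DeterminedOn F Sᶜ) :
    probEvent p (fun A => E A ∧ F A) = probOn p S E * probOn p Sᶜ F := by
  rw [← probOn_union disjoint_compl_right, union_compl, probEvent_eq_probOn_univ]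
  exact sum_congr rfl fun A _ => by simp only [← hE A, ← hF A]; congr

theorem probEvent_and {E F : Finset V → Prop} {S T : Finset V} (hE : DeterminedOn E S)
    (hF : DeterminedOn F T) (hST : Disjoint S T) :
    probEvent p (fun A => E A ∧ F A) = probEvent p E * probEvent p F := by
  have hF' := hF.mono (subset_compl_iff_disjoint_left.2 hST)
  have hE₁ : probEvent p E = probOn p S E := by
    simpa [probOn_true] using probEvent_and_eq_probOn_mul (p := p) hE (F := fun _ => True)
      fun _ => Iff.rfl
  have hF₁ : probEvent p F = probOn p Sᶜ F := by
    simpa [probOn_true] using probEvent_and_eq_probOn_mul (p := p) (E := fun _ => True)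
      (fun _ => Iff.rfl) hF'
  rw [probEvent_and_eq_probOn_mul hE hF', hE₁, hF₁]

theorem probEvent_forall {ι : Type*} {s : Finset ι} {T : ι → Finset V}
    {E : ι → Finset V → Prop} (hT : (s : Set ι).PairwiseDisjoint T)
    (hE : ∀ i ∈ s, DeterminedOn (E i) (T i)) :
    probEvent p (fun A => ∀ i ∈ s, E i A) = ∏ i ∈ s, probEvent p (E i) := by
  induction s using Finset.induction_on with
  | empty => simpa using (probEvent_eq_probOn_univ (p := p) _).trans (probOn_true univ)
  | @insert a s ha ih =>
    rw [coe_insert, Set.pairwiseDisjoint_insert] at hT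
    have hs : DeterminedOn (fun A => ∀ i ∈ s, E i A) (s.biUnion T) := fun A =>
      forall₂_congr fun i hi => by
        rw [(hE i (mem_insert_of_mem hi)).mono (subset_biUnion_of_mem T hi) A]
    simp only [forall_mem_insert]
    rw [probEvent_and (hE a (mem_insert_self a s)) hs,
      ih hT.1 fun i hi => hE i (mem_insert_of_mem hi),
      prod_insert ha]
    exact (disjoint_biUnion_right _ _ _).2 fun i hi => hT.2 i hi fun h => ha (h ▸ hi)

theorem configProb_nonneg (hp : p ∈ Set.Icc (0 : ℝ) 1) (A : Finset V) : 0 ≤ configProb p A :=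
  mul_nonneg (pow_nonneg hp.1 _) (pow_nonneg (sub_nonneg.2 hp.2) _)

theorem probEvent_nonneg (hp : p ∈ Set.Icc (0 : ℝ) 1) (E : Finset V → Prop) :
    0 ≤ probEvent p E :=
  sum_nonneg fun A _ => ite_nonneg (configProb_nonneg hp A) le_rfl

theorem probEvent_mono (hp : p ∈ Set.Icc (0 : ℝ) 1) {E F : Finset V → Prop}
    (h : ∀ A, E A → F A) : probEvent p E ≤ probEvent p F :=
  sum_le_sum fun A _ => by
    split_ifs with hE hF
    exacts [le_rfl, (hF (h A hE)).elim, configProb_nonneg hp A, le_rfl]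

theorem probEvent_exists_le {ι : Type*} (hp : p ∈ Set.Icc (0 : ℝ) 1) (s : Finset ι)
    (E : ι → Finset V → Prop) :
    probEvent p (fun A => ∃ i ∈ s, E i A) ≤ ∑ i ∈ s, probEvent p (E i) := by
  simp only [probEvent]
  rw [sum_comm]
  refine sum_le_sum fun A _ => ?_
  have hnonneg : ∀ i ∈ s, 0 ≤ if E i A then configProb p A else 0 :=
    fun _ _ => ite_nonneg (configProb_nonneg hp A) le_rfl
  split_ifs with hA
  · obtain ⟨i, hi, hEi⟩ := hA
    exact (if_pos hEi).symm.le.trans (single_le_sum hnonneg hi)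
  · exact sum_nonneg hnonneg

end Probability

section Bootstrap

variable {V : Type*} [Fintype V] [DecidableEq V] (G : SimpleGraph V) (r : ℕ)

theorem mem_bootSets_congr (i : ℕ) (z : V) {A B : Finset V}
    (h : ∀ w, G.edist w z ≤ i → (w ∈ A ↔ w ∈ B)) :
    z ∈ bootSets G r A i ↔ z ∈ bootSets G r B i := by
  induction i generalizing z with
  | zero => exact h z (by simp)
  | succ i ih =>
    have hz := ih z fun w hw => h w (hw.trans (by gcongr; omega))
    have hN : G.neighborFinset z ∩ bootSets G r A i = G.neighborFinset z ∩ bootSets G r B i := by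
      ext u
      simp only [mem_inter, SimpleGraph.mem_neighborFinset]
      refine and_congr_right fun hzu => ih u fun w hw => h w ?_
      calc G.edist w z ≤ G.edist w u + G.edist u z := G.edist_triangle
        _ ≤ i + 1 := by
          gcongr
          rw [SimpleGraph.edist_comm, SimpleGraph.edist_eq_one_iff_adj.2 hzu]
        _ = ((i + 1 : ℕ) : ℕ∞) := by push_cast; rfl
    simp only [bootSets, mem_union, mem_filter, mem_univ, true_and, hN, hz]

theorem determinedOn_notMem_bootSets (i : ℕ) (z : V) :
    DeterminedOn (fun A => z ∉ bootSets G r A i) (univ.filter fun w => G.edist w z ≤ i) :=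
  fun _ => not_congr <| mem_bootSets_congr G r i z fun w hw => by simp [hw]

variable {G r}

theorem card_neighborFinset_inter_lt_of_notMem_bootSets_succ {A : Finset V} {v : V} {i : ℕ}
    (hv : v ∉ bootSets G r A (i + 1)) : #(G.neighborFinset v ∩ bootSets G r A i) < r := by
  by_contra! hr
  exact hv (mem_union_right _ (mem_filter.2 ⟨mem_univ v, hr⟩))

end Bootstrap

section Cube

variable {n : ℕ}

def flipSet (x : Fin n → Bool) (S : Finset (Fin n)) : Fin n → Bool :=
  fun j => if j ∈ S then !x j else x j

theorem flipSet_empty (x : Fin n → Bool) : flipSet x ∅ = x := by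
  funext j; simp [flipSet]

theorem flipSet_insert {x : Fin n → Bool} {i : Fin n} {S : Finset (Fin n)} (hi : i ∉ S) :
    flipSet x (insert i S) = flipSet (flipSet x {i}) S := by
  funext j
  by_cases hj : j = i
  · subst hj; simp [flipSet, hi]
  · by_cases hjS : j ∈ S <;> simp [flipSet, hj, hjS]

theorem hammingDist_flipSet_flipSet {x : Fin n → Bool} {S S' : Finset (Fin n)}
    (h : Disjoint S S') : hammingDist (flipSet x S) (flipSet x S') = #S + #S' := by
  rw [← card_union_of_disjoint h, hammingDist]
  congr 1
  ext i
  rw [mem_filter, mem_union]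
  by_cases hS : i ∈ S
  · simp [flipSet, hS, disjoint_left.1 h hS]
  · by_cases hS' : i ∈ S' <;> simp [flipSet, hS, hS']

theorem cubeGraph_adj_flipSet_singleton (x : Fin n → Bool) (i : Fin n) :
    (cubeGraph n 1).Adj x (flipSet x {i}) := by
  have h := hammingDist_flipSet_flipSet (x := x) (disjoint_empty_left {i})
  rw [flipSet_empty, card_empty, card_singleton, zero_add] at h
  exact ⟨h.ge, h.le⟩

theorem flipSet_singleton_injective (x : Fin n → Bool) :
    Function.Injective fun i : Fin n => flipSet x {i} := by
  intro i j hij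
  by_contra hne
  simpa [flipSet, hne] using congrFun hij i

theorem hammingDist_le_walk_length {u v : Fin n → Bool} (w : (cubeGraph n 1).Walk u v) :
    hammingDist u v ≤ w.length := by
  induction w with
  | nil => simp
  | @cons u v w hadj p ih =>
    rw [SimpleGraph.Walk.length_cons]
    exact (hammingDist_triangle u v w).trans (by have := hadj.2; omega)

theorem hammingDist_le_edist (u v : Fin n → Bool) :
    (hammingDist u v : ℕ∞) ≤ (cubeGraph n 1).edist u v := by
  rcases eq_or_ne ((cubeGraph n 1).edist u v) ⊤ with h | h
  · simp [h]
  · obtain ⟨w, hw⟩ := SimpleGraph.exists_walk_of_edist_ne_top h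
    rw [← hw]
    exact_mod_cast hammingDist_le_walk_length w

variable {r : ℕ} {A : Finset (Fin n → Bool)}

theorem exists_flipSet_singleton_notMem_bootSets {v : Fin n → Bool} {j : ℕ}
    (hv : v ∉ bootSets (cubeGraph n 1) r A (j + 1)) {U : Finset (Fin n)} (hU : #U + r ≤ n) :
    ∃ i ∉ U, flipSet v {i} ∉ bootSets (cubeGraph n 1) r A j := by
  set bad := univ.filter fun i => flipSet v {i} ∈ bootSets (cubeGraph n 1) r A j
  have hbad : #bad < r := by
    refine lt_of_le_of_lt ?_ (card_neighborFinset_inter_lt_of_notMem_bootSets_succ hv)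
    refine card_le_card_of_injOn (fun i => flipSet v {i}) (fun i hi => ?_)
      (flipSet_singleton_injective v).injOn
    rw [mem_coe, mem_filter] at hi
    exact mem_inter.2 ⟨(SimpleGraph.mem_neighborFinset _ _ _).2
      (cubeGraph_adj_flipSet_singleton v i), hi.2⟩
  have hcard : #(U ∪ bad) < #(univ : Finset (Fin n)) := by
    have := card_union_le U bad
    rw [card_univ, Fintype.card_fin]
    omega
  obtain ⟨i, -, hi⟩ := exists_mem_notMem_of_card_lt_card hcard
  rw [mem_union, not_or, mem_filter, not_and] at hi
  exact ⟨i, hi.1, hi.2 (mem_univ i)⟩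

theorem exists_flipSet_notMem_bootSets {j : ℕ} (s : ℕ) {v : Fin n → Bool}
    (hv : v ∉ bootSets (cubeGraph n 1) r A (j + s)) {U : Finset (Fin n)}
    (hU : #U + s + r ≤ n) :
    ∃ S : Finset (Fin n), #S = s ∧ Disjoint S U ∧
      flipSet v S ∉ bootSets (cubeGraph n 1) r A j := by
  induction s generalizing v U with
  | zero => exact ⟨∅, rfl, disjoint_empty_left U, by rwa [flipSet_empty]⟩
  | succ s ih =>
    obtain ⟨i, hiU, hvi⟩ := exists_flipSet_singleton_notMem_bootSets hv (U := U) (by omega)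
    obtain ⟨S, hS, hSU, hSv⟩ := ih hvi (U := insert i U)
      (by rw [card_insert_of_notMem hiU]; omega)
    have hiS : i ∉ S := fun h => disjoint_left.1 hSU h (mem_insert_self i U)
    refine ⟨insert i S, by rw [card_insert_of_notMem hiS, hS], ?_, by rwa [flipSet_insert hiS]⟩
    exact disjoint_insert_left.2 ⟨hiU, hSU.mono_right (subset_insert i U)⟩

end Cube

section Families

variable {n : ℕ}

def disjointFamilies (n k m : ℕ) : Finset (Finset (Finset (Fin n))) :=
  ((univ.powersetCard (k + 1)).powersetCard m).filter fun 𝒮 =>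
    (𝒮 : Set (Finset (Fin n))).PairwiseDisjoint id

theorem mem_disjointFamilies {k m : ℕ} {𝒮 : Finset (Finset (Fin n))} :
    𝒮 ∈ disjointFamilies n k m ↔
      #𝒮 = m ∧ (∀ S ∈ 𝒮, #S = k + 1) ∧ (𝒮 : Set (Finset (Fin n))).PairwiseDisjoint id := by
  simp only [disjointFamilies, mem_filter, mem_powersetCard, subset_iff, mem_univ, implies_true,
    true_and]
  tauto

theorem card_disjointFamilies_le (n k m : ℕ) : #(disjointFamilies n k m) ≤ (n ^ (k + 1)) ^ m :=
  calc #(disjointFamilies n k m) ≤ (n.choose (k + 1)).choose m := by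
        simpa [disjointFamilies, card_powersetCard] using card_filter_le
          (((univ : Finset (Fin n)).powersetCard (k + 1)).powersetCard m) _
    _ ≤ (n.choose (k + 1)) ^ m := Nat.choose_le_pow _ _
    _ ≤ (n ^ (k + 1)) ^ m := Nat.pow_le_pow_left (Nat.choose_le_pow _ _) m

variable {r k : ℕ} {A : Finset (Fin n → Bool)} {x : Fin n → Bool}

theorem exists_mem_disjointFamilies_notMem_bootSets
    (hx : x ∉ bootSets (cubeGraph n 1) r A (2 * k + 1)) (m : ℕ) (hm : m * (k + 1) + r ≤ n) :
    ∃ 𝒮 ∈ disjointFamilies n k m, ∀ S ∈ 𝒮, flipSet x S ∉ bootSets (cubeGraph n 1) r A k := by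
  induction m with
  | zero => exact ⟨∅, by simp [mem_disjointFamilies], by simp⟩
  | succ m ih =>
    obtain ⟨𝒮, h𝒮, h𝒮x⟩ := ih (by nlinarith)
    obtain ⟨h𝒮card, h𝒮k, h𝒮disj⟩ := mem_disjointFamilies.1 h𝒮
    have hU : #(𝒮.biUnion id) ≤ m * (k + 1) :=
      h𝒮card ▸ card_biUnion_le_card_mul _ _ _ fun S hS => (h𝒮k S hS).le
    obtain ⟨S₀, hS₀, hS₀U, hS₀x⟩ := exists_flipSet_notMem_bootSets (k + 1)
      (by rwa [show k + (k + 1) = 2 * k + 1 by omega]) (U := 𝒮.biUnion id) (by nlinarith)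
    have hdisj : ∀ S ∈ 𝒮, Disjoint S₀ S := fun S hS =>
      hS₀U.mono_right (subset_biUnion_of_mem id hS)
    have hS₀𝒮 : S₀ ∉ 𝒮 := fun h => by
      simpa [hS₀] using card_eq_zero.2 (disjoint_self.1 (hdisj S₀ h))
    refine ⟨insert S₀ 𝒮, mem_disjointFamilies.2 ⟨?_, ?_, ?_⟩, ?_⟩
    · rw [card_insert_of_notMem hS₀𝒮, h𝒮card]
    · simpa [hS₀] using h𝒮k
    · rw [coe_insert]
      exact h𝒮disj.insert fun S hS _ => hdisj S hS
    · simpa [hS₀x] using h𝒮x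

end Families

section Boost

variable {n r k m : ℕ} {p q : ℝ}

theorem probEvent_forall_flipSet_notMem_bootSets_le (hp : p ∈ Set.Icc (0 : ℝ) 1)
    (hq : ∀ z, probEvent p (fun A => z ∉ bootSets (cubeGraph n 1) r A k) ≤ q)
    {𝒮 : Finset (Finset (Fin n))} (h𝒮 : 𝒮 ∈ disjointFamilies n k m) (x : Fin n → Bool) :
    probEvent p (fun A => ∀ S ∈ 𝒮, flipSet x S ∉ bootSets (cubeGraph n 1) r A k) ≤ q ^ m := by
  obtain ⟨h𝒮card, h𝒮k, h𝒮disj⟩ := mem_disjointFamilies.1 h𝒮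
  have hballs : (𝒮 : Set (Finset (Fin n))).PairwiseDisjoint fun S =>
      univ.filter fun w => (cubeGraph n 1).edist w (flipSet x S) ≤ k := by
    intro S hS S' hS' hSS'
    refine disjoint_left.2 fun w hw hw' => ?_
    have hdist : hammingDist (flipSet x S) (flipSet x S') = #S + #S' :=
      hammingDist_flipSet_flipSet (h𝒮disj hS hS' hSS')
    have hw₁ : hammingDist w (flipSet x S) ≤ k := by
      exact_mod_cast (hammingDist_le_edist _ _).trans (mem_filter.1 hw).2
    have hw₂ : hammingDist w (flipSet x S') ≤ k := by
      exact_mod_cast (hammingDist_le_edist _ _).trans (mem_filter.1 hw').2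
    have := hammingDist_triangle_left (flipSet x S) (flipSet x S') w
    rw [h𝒮k S hS, h𝒮k S' hS'] at hdist
    omega
  rw [probEvent_forall hballs fun S _ => determinedOn_notMem_bootSets _ _ _ _]
  calc ∏ S ∈ 𝒮, probEvent p (fun A => flipSet x S ∉ bootSets (cubeGraph n 1) r A k)
      ≤ ∏ _S ∈ 𝒮, q := prod_le_prod (fun _ _ => probEvent_nonneg hp _) fun S _ => hq _
    _ = q ^ m := by rw [prod_const, h𝒮card]

theorem probEvent_notMem_bootSets_two_mul_add_one_le (hp : p ∈ Set.Icc (0 : ℝ) 1)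
    (hq : ∀ z, probEvent p (fun A => z ∉ bootSets (cubeGraph n 1) r A k) ≤ q)
    (hm : m * (k + 1) + r ≤ n) (x : Fin n → Bool) :
    probEvent p (fun A => x ∉ bootSets (cubeGraph n 1) r A (2 * k + 1)) ≤
      ((n : ℝ) ^ (k + 1) * q) ^ m := by
  have hq₀ : 0 ≤ q := (probEvent_nonneg hp _).trans (hq x)
  calc probEvent p (fun A => x ∉ bootSets (cubeGraph n 1) r A (2 * k + 1))
      ≤ probEvent p (fun A => ∃ 𝒮 ∈ disjointFamilies n k m,
          ∀ S ∈ 𝒮, flipSet x S ∉ bootSets (cubeGraph n 1) r A k) :=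
        probEvent_mono hp fun _ hx => exists_mem_disjointFamilies_notMem_bootSets hx m hm
    _ ≤ ∑ 𝒮 ∈ disjointFamilies n k m,
          probEvent p (fun A => ∀ S ∈ 𝒮, flipSet x S ∉ bootSets (cubeGraph n 1) r A k) :=
        probEvent_exists_le hp _ _
    _ ≤ ∑ _𝒮 ∈ disjointFamilies n k m, q ^ m :=
        sum_le_sum fun _ h𝒮 => probEvent_forall_flipSet_notMem_bootSets_le hp hq h𝒮 x
    _ = #(disjointFamilies n k m) * q ^ m := by rw [sum_const, nsmul_eq_mul]
    _ ≤ ((n : ℝ) ^ (k + 1)) ^ m * q ^ m := by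
        gcongr
        exact_mod_cast card_disjointFamilies_le n k m
    _ = ((n : ℝ) ^ (k + 1) * q) ^ m := (mul_pow _ _ _).symm

end Boost

section Asymptotics

open Real

theorem eventually_two_mul_ceil_rpow_le {a : ℝ} (ha : a < 1) :
    ∀ᶠ n : ℕ in atTop, 2 * ⌈(n : ℝ) ^ a⌉₊ ≤ n := by
  have hgrowth : ∀ᶠ n : ℕ in atTop, 4 ≤ (n : ℝ) ^ (1 - a) :=
    tendsto_natCast_atTop_atTop.eventually
      ((tendsto_rpow_atTop (by linarith)).eventually_ge_atTop 4)
  filter_upwards [hgrowth, eventually_ge_atTop 4] with n hn hn4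
  have hn4' : (4 : ℝ) ≤ n := by exact_mod_cast hn4
  have hn0 : (0 : ℝ) < n := by linarith
  have hpow : 4 * (n : ℝ) ^ a ≤ n :=
    calc 4 * (n : ℝ) ^ a ≤ (n : ℝ) ^ (1 - a) * (n : ℝ) ^ a := by gcongr
      _ = n := by rw [← rpow_add hn0, sub_add_cancel, rpow_one]
  have hceil := Nat.ceil_lt_add_one (rpow_nonneg hn0.le a)
  have : ((2 * ⌈(n : ℝ) ^ a⌉₊ : ℕ) : ℝ) ≤ n := by push_cast; linarith
  exact_mod_cast this

theorem eventually_pow_mul_exp_neg_le {c δ : ℝ} (hc : 0 < c) (hδ : 0 < δ) (K : ℕ) :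
    ∀ᶠ n : ℕ in atTop, (n : ℝ) ^ K * exp (-c * (n : ℝ) ^ δ) ≤ exp (-(c / 2) * (n : ℝ) ^ δ) := by
  have hlog := (isLittleO_log_rpow_atTop hδ).bound (c := c / (2 * (K + 1))) (by positivity)
  filter_upwards [tendsto_natCast_atTop_atTop.eventually hlog, eventually_ge_atTop 1]
    with n hn hn1
  have hn1' : (1 : ℝ) ≤ n := by exact_mod_cast hn1
  have hlog₀ := log_nonneg hn1'
  rw [norm_of_nonneg hlog₀, norm_of_nonneg (rpow_nonneg (by linarith) δ)] at hn
  have hKlog : K * log n ≤ (c / 2) * (n : ℝ) ^ δ :=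
    calc K * log n ≤ (K + 1) * log n := by nlinarith
      _ ≤ (K + 1) * (c / (2 * (K + 1)) * (n : ℝ) ^ δ) := by gcongr
      _ = (c / 2) * (n : ℝ) ^ δ := by field_simp
  calc (n : ℝ) ^ K * exp (-c * (n : ℝ) ^ δ) = exp (K * log n - c * (n : ℝ) ^ δ) := by
        rw [exp_sub, ← log_pow, exp_log (by positivity), neg_mul, exp_neg, div_eq_mul_inv]
    _ ≤ exp (-(c / 2) * (n : ℝ) ^ δ) := exp_le_exp.2 (by linarith)

theorem exp_neg_rpow_pow_div_le {c δ : ℝ} (hc : 0 ≤ c) {k n : ℕ} (hn : 4 * (k + 1) ≤ n) :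
    exp (-(c / 2) * (n : ℝ) ^ δ) ^ (n / (2 * (k + 1))) ≤
      exp (-(c / (8 * (k + 1))) * (n : ℝ) ^ (1 + δ)) := by
  set m := n / (2 * (k + 1))
  have hm : n ≤ 4 * ((k + 1) * m) := by
    have h₁ : 2 * ((k + 1) * m) + n % (2 * (k + 1)) = n := by
      rw [← mul_assoc]; exact Nat.div_add_mod n (2 * (k + 1))
    have h₂ := Nat.mod_lt n (show 0 < 2 * (k + 1) by omega)
    omega
  have hm' : (n : ℝ) ≤ 4 * ((k + 1) * m) := by exact_mod_cast hm
  have hn₀ : (0 : ℝ) < n := by exact_mod_cast (show 0 < n by omega)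
  rw [← exp_nat_mul, rpow_add hn₀, rpow_one]
  refine exp_le_exp.2 ?_
  have hnδ := rpow_nonneg hn₀.le δ
  have hcoef : c / (8 * (k + 1)) * n ≤ c / 2 * m := by
    rw [div_mul_eq_mul_div, div_le_iff₀ (by positivity)]
    nlinarith
  nlinarith

end Asymptotics

theorem boost_uninfected_prob_Qn_general (c δ a : ℝ) (hc : 0 < c) (hδ : 0 < δ) (k : ℕ)
    (ha₂ : a < 1) (p : ℕ → ℝ) (hp : ∀ n, p n ∈ Set.Icc (0 : ℝ) 1)
    (h : ∃ n₀ : ℕ, ∀ n ≥ n₀, ∀ x : Fin n → Bool,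
      probEvent (p n) (fun A0 => x ∉ bootSets (cubeGraph n 1) ⌈(n : ℝ) ^ a⌉₊ A0 k) ≤
        Real.exp (-c * (n : ℝ) ^ δ)) :
    ∃ d : ℝ, 0 < d ∧ ∃ n₁ : ℕ, ∀ n ≥ n₁, ∀ x : Fin n → Bool,
      probEvent (p n)
          (fun A0 => x ∉ bootSets (cubeGraph n 1) ⌈(n : ℝ) ^ a⌉₊ A0 (2 * k + 1)) ≤
        Real.exp (-d * (n : ℝ) ^ (1 + δ)) := by
  obtain ⟨n₀, h⟩ := h
  refine ⟨c / (8 * (k + 1)), by positivity, ?_⟩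
  obtain ⟨n₁, hn₁⟩ := eventually_atTop.1 <| (eventually_ge_atTop (max n₀ (4 * (k + 1)))).and <|
    (eventually_two_mul_ceil_rpow_le ha₂).and (eventually_pow_mul_exp_neg_le hc hδ (k + 1))
  refine ⟨n₁, fun n hn x => ?_⟩
  obtain ⟨hn, hceil, hexp⟩ := hn₁ n hn
  have hroom : n / (2 * (k + 1)) * (k + 1) + ⌈(n : ℝ) ^ a⌉₊ ≤ n := by
    have := Nat.div_mul_le_self n (2 * (k + 1))
    rw [show n / (2 * (k + 1)) * (2 * (k + 1)) = 2 * (n / (2 * (k + 1)) * (k + 1)) by ring] at this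
    omega
  calc _ ≤ ((n : ℝ) ^ (k + 1) * Real.exp (-c * (n : ℝ) ^ δ)) ^ (n / (2 * (k + 1))) :=
        probEvent_notMem_bootSets_two_mul_add_one_le (hp n) (h n (le_of_max_le_left hn)) hroom x
    _ ≤ Real.exp (-(c / 2) * (n : ℝ) ^ δ) ^ (n / (2 * (k + 1))) :=
        pow_le_pow_left₀ (by positivity) hexp _
    _ ≤ _ := exp_neg_rpow_pow_div_le hc.le (le_of_max_le_right hn)

/-- Let `c, δ > 0`, `k ∈ ℕ`, `0 < a < 1`, and consider bootstrap percolation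
on `Q_n` with threshold `⌈n^a⌉` and initial infection probability `p = p(n)`.  If for all
sufficiently large `n` every vertex satisfies `P(x ∉ A_k) ≤ exp(-c n^δ)`, then there is a
constant `d > 0` such that for all sufficiently large `n` every vertex satisfies
`P(x ∉ A_{2k+1}) ≤ exp(-d n^{1+δ})`. -/
theorem boost_uninfected_prob_Qn (c δ a : ℝ) (hc : 0 < c) (hδ : 0 < δ) (k : ℕ)
    (ha₁ : 0 < a) (ha₂ : a < 1) (p : ℕ → ℝ) (hp : ∀ n, p n ∈ Set.Icc (0 : ℝ) 1)
    (h : ∃ n₀ : ℕ, ∀ n ≥ n₀, ∀ x : Fin n → Bool,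
      probEvent (p n) (fun A0 => x ∉ bootSets (cubeGraph n 1) ⌈(n : ℝ) ^ a⌉₊ A0 k) ≤
        Real.exp (-c * (n : ℝ) ^ δ)) :
    ∃ d : ℝ, 0 < d ∧ ∃ n₁ : ℕ, ∀ n ≥ n₁, ∀ x : Fin n → Bool,
      probEvent (p n)
          (fun A0 => x ∉ bootSets (cubeGraph n 1) ⌈(n : ℝ) ^ a⌉₊ A0 (2 * k + 1)) ≤
        Real.exp (-d * (n : ℝ) ^ (1 + δ)) :=
  boost_uninfected_prob_Qn_general c δ a hc hδ k ha₂ p hp h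

end
end

section
/- Let t, k, d₁, …, d_k ∈ ℕ with t ≥ 1 and k ≥ 1, and let p ∈ (0,1). Let X₁, …, X_k be independent random variables with X_i ∼ Bin(d_i, p), let Y_k = Σ_{i=1}^k i·X_i, and let D(k) = Σ_{i=1}^k i²·d_i. Then P(Y_k ≥ E[Y_k] + t) ≤ (2t)^{k−1}·exp(−2t²/D(k)). -/
open Finset Filter
open scoped Classical

noncomputable section

/-!
Chernoff's bound with parameter `λ = 4t/D(k)`, combined with Hoeffding's lemma
`E[e^{s(B - p)}] ≤ e^{s²/8}` for each of the underlying Bernoulli trials, already gives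
`P(Y_k ≥ E[Y_k] + t) ≤ exp(-2t²/D(k))`; the factor `(2t)^{k-1}` is at least `1`.
-/

open Real MeasureTheory ProbabilityTheory

def binomialWeight (n : ℕ) (p : ℝ) (v : ℕ) : ℝ :=
  n.choose v * p ^ v * (1 - p) ^ (n - v)

theorem binomialWeight_nonneg {p : ℝ} (hp₀ : 0 ≤ p) (hp₁ : p ≤ 1) (n v : ℕ) :
    0 ≤ binomialWeight n p v := by
  have : 0 ≤ 1 - p := by linarith
  unfold binomialWeight
  positivity

theorem sum_binomialWeight_mul_exp (n : ℕ) (p c : ℝ) :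
    ∑ v : Fin (n + 1), binomialWeight n p v * exp (c * v) = (p * exp c + (1 - p)) ^ n := by
  rw [Fin.sum_univ_eq_sum_range (fun v => binomialWeight n p v * exp (c * v)), add_pow]
  refine Finset.sum_congr rfl fun v _ => ?_
  rw [binomialWeight, mul_pow, ← exp_nat_mul]
  ring_nf

theorem one_sub_add_mul_exp_le_exp {p : ℝ} (hp₀ : 0 ≤ p) (hp₁ : p ≤ 1) (s : ℝ) :
    1 - p + p * exp s ≤ exp (p * s + s ^ 2 / 8) := by
  let q : unitInterval := ⟨p, hp₀, hp₁⟩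
  have hmean : Ber((1 : ℝ), 0, q)[id] = p := by simp [integral_bernoulliMeasure, q]
  have hsupp : ∀ᵐ x ∂Ber((1 : ℝ), 0, q), id x ∈ Set.Icc (0 : ℝ) 1 :=
    ae_iff.2 (bernoulliMeasure_apply_of_notMem_of_notMem q measurableSet_Icc.compl
      (by simp) (by simp))
  have hmgf := (hasSubgaussianMGF_of_mem_Icc measurable_id.aemeasurable hsupp).mgf_le s
  simp only [hmean, mgf, integral_bernoulliMeasure, q] at hmgf
  norm_num at hmgf
  calc 1 - p + p * exp s
        = exp (p * s) * (p * exp (s * (1 - p)) + (1 - p) * exp (-(s * p))) := by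
        rw [mul_add, mul_left_comm, ← exp_add, mul_left_comm, ← exp_add,
          show p * s + s * (1 - p) = s by ring, show p * s + -(s * p) = 0 by ring, exp_zero]
        ring
    _ ≤ exp (p * s) * exp (s ^ 2 / 8) := by
        gcongr
        exact hmgf.trans_eq (by ring_nf)
    _ = exp (p * s + s ^ 2 / 8) := (exp_add _ _).symm

theorem sum_binomialWeight_mul_exp_le {p : ℝ} (hp₀ : 0 ≤ p) (hp₁ : p ≤ 1)
    (n : ℕ) (c : ℝ) :
    ∑ v : Fin (n + 1), binomialWeight n p v * exp (c * v) ≤ exp (n * (p * c + c ^ 2 / 8)) := by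
  rw [sum_binomialWeight_mul_exp, exp_nat_mul]
  gcongr
  linarith [one_sub_add_mul_exp_le_exp hp₀ hp₁ c]

theorem sum_prod_mul_exp_sum_eq_prod_sum {ι : Type*} [Fintype ι] [DecidableEq ι]
    {β : ι → Type*} [∀ i, Fintype (β i)] (w g : ∀ i, β i → ℝ) :
    ∑ x : ∀ i, β i, (∏ i, w i (x i)) * exp (∑ i, g i (x i)) =
      ∏ i, ∑ v, w i v * exp (g i v) := by
  simp only [exp_sum, ← Finset.prod_mul_distrib]
  exact (Fintype.prod_sum fun i v => w i v * exp (g i v)).symm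

theorem sum_ite_le_exp_mul_sum_mul_exp {α : Type*} [Fintype α] {w : α → ℝ} (hw : 0 ≤ w)
    (f : α → ℝ) (a : ℝ) {l : ℝ} (hl : 0 ≤ l) :
    ∑ x, (if a ≤ f x then w x else 0) ≤ exp (-(l * a)) * ∑ x, w x * exp (l * f x) := by
  rw [Finset.mul_sum]
  refine Finset.sum_le_sum fun x _ => ?_
  rw [mul_left_comm, ← exp_add]
  split_ifs with h
  · exact le_mul_of_one_le_right (hw x) (one_le_exp (by nlinarith))
  · exact mul_nonneg (hw x) (exp_pos _).le

theorem weighted_binomial_tail_le_exp {ι : Type*} [Fintype ι] [DecidableEq ι] (d : ι → ℕ)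
    (c : ι → ℝ) {p : ℝ} (hp₀ : 0 ≤ p) (hp₁ : p ≤ 1) {t : ℝ} (ht : 0 ≤ t) :
    ∑ x : ∀ i, Fin (d i + 1),
        (if p * ∑ i, c i * d i + t ≤ ∑ i, c i * ((x i : ℕ) : ℝ) then
          ∏ i, binomialWeight (d i) p (x i) else 0) ≤
      exp (-2 * t ^ 2 / ∑ i, c i ^ 2 * d i) := by
  set D := ∑ i, c i ^ 2 * d i
  set l := 4 * t / D
  have hl : 0 ≤ l := by positivity
  calc _ ≤ exp (-(l * (p * ∑ i, c i * d i + t))) * ∑ x : ∀ i, Fin (d i + 1),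
          (∏ i, binomialWeight (d i) p (x i)) * exp (l * ∑ i, c i * ((x i : ℕ) : ℝ)) :=
        sum_ite_le_exp_mul_sum_mul_exp
          (fun x => Finset.prod_nonneg fun i _ => binomialWeight_nonneg hp₀ hp₁ _ _) _ _ hl
    _ = exp (-(l * (p * ∑ i, c i * d i + t))) *
          ∏ i, ∑ v : Fin (d i + 1), binomialWeight (d i) p v * exp (l * c i * v) := by
        rw [← sum_prod_mul_exp_sum_eq_prod_sum]
        simp only [Finset.mul_sum, mul_assoc]
    _ ≤ exp (-(l * (p * ∑ i, c i * d i + t))) *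
          ∏ i, exp (d i * (p * (l * c i) + (l * c i) ^ 2 / 8)) := by
        gcongr
        · exact fun i _ => Finset.sum_nonneg fun v _ =>
            mul_nonneg (binomialWeight_nonneg hp₀ hp₁ _ _) (exp_pos _).le
        · exact sum_binomialWeight_mul_exp_le hp₀ hp₁ _ _
    _ = exp (-(l * t) + l ^ 2 / 8 * D) := by
        rw [← exp_sum, ← exp_add]
        have hsum : ∑ i, (d i : ℝ) * (p * (l * c i) + (l * c i) ^ 2 / 8) =
            l * (p * ∑ i, c i * d i) + l ^ 2 / 8 * D := by
          simp only [D, Finset.mul_sum, ← Finset.sum_add_distrib]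
          exact Finset.sum_congr rfl fun i _ => by ring
        rw [hsum]
        congr 1
        ring
    _ = exp (-2 * t ^ 2 / D) := by
        congr 1
        rcases eq_or_ne D 0 with hD | hD
        · -- then `l = 0` and `-2 * t ^ 2 / D = 0`, both by the convention `x / 0 = 0`
          simp [l, hD]
        · simp only [l]
          field_simp
          ring

theorem weighted_binomial_tail_general (k t : ℕ) (ht : 1 ≤ t) (d : Fin k → ℕ)
    (p : ℝ) (hp₀ : 0 < p) (hp₁ : p < 1) :
    (∑ x : ∀ i : Fin k, Fin (d i + 1),
        if p * ((∑ i : Fin k, ((i : ℕ) + 1) * d i : ℕ) : ℝ) + (t : ℝ) ≤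
            ((∑ i : Fin k, ((i : ℕ) + 1) * (x i : ℕ) : ℕ) : ℝ) then
          ∏ i : Fin k,
            ((d i).choose (x i : ℕ) : ℝ) * p ^ (x i : ℕ) * (1 - p) ^ (d i - (x i : ℕ))
        else 0) ≤
      (2 * (t : ℝ)) ^ (k - 1) *
        Real.exp (-2 * (t : ℝ) ^ 2 / ((∑ i : Fin k, ((i : ℕ) + 1) ^ 2 * d i : ℕ) : ℝ)) := by
  have htR : (1 : ℝ) ≤ t := by exact_mod_cast ht
  have hexp := weighted_binomial_tail_le_exp d (fun i => (i : ℝ) + 1) hp₀.le hp₁.le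
    (zero_le_one.trans htR)
  have hfactor : (1 : ℝ) ≤ (2 * t) ^ (k - 1) := one_le_pow₀ (by linarith)
  push_cast
  exact hexp.trans (le_mul_of_one_le_left (exp_pos _).le hfactor)

/-- Let `t, k ≥ 1`, `d₁, …, d_k ∈ ℕ` and `p ∈ (0,1)`.  Let
`X₁, …, X_k` be independent with `X_i ∼ Bin(d_i, p)` (here the joint distribution is given
explicitly as the product of binomial weights over outcomes `x i ∈ {0,…,d_i}`), let
`Y_k = ∑ i·X_i` (with `i` running through `1,…,k`), whose expectation is `p·∑ i·d_i`, and let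
`D(k) = ∑ i²·d_i`.  Then `P(Y_k ≥ E[Y_k] + t) ≤ (2t)^{k-1}·exp(-2t²/D(k))`. -/
theorem weighted_binomial_tail (k t : ℕ) (hk : 1 ≤ k) (ht : 1 ≤ t) (d : Fin k → ℕ)
    (p : ℝ) (hp₀ : 0 < p) (hp₁ : p < 1) :
    (∑ x : ∀ i : Fin k, Fin (d i + 1),
        if p * ((∑ i : Fin k, ((i : ℕ) + 1) * d i : ℕ) : ℝ) + (t : ℝ) ≤
            ((∑ i : Fin k, ((i : ℕ) + 1) * (x i : ℕ) : ℕ) : ℝ) then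
          ∏ i : Fin k,
            ((d i).choose (x i : ℕ) : ℝ) * p ^ (x i : ℕ) * (1 - p) ^ (d i - (x i : ℕ))
        else 0) ≤
      (2 * (t : ℝ)) ^ (k - 1) *
        Real.exp (-2 * (t : ℝ) ^ 2 / ((∑ i : Fin k, ((i : ℕ) + 1) ^ 2 * d i : ℕ) : ℝ)) :=
  weighted_binomial_tail_general k t ht d p hp₀ hp₁

end
end
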